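/- arXiv:2601.07510 — 7 statements merged into one kernel-verified Lean document; each statement's English description precedes it below -/
import Mathlib

section
/- (Proposition 1) Suppose the buyer has ordered the lowest-quality model M_1 at price p_1 with p_1 ≤ U_1, and C_T > 0. Then the profile in which the seller delivers s = 1 and the buyer does not verify (v = NV) is a pure Nash equilibrium of Game 1, and it is the unique one: every pure Nash equilibrium of Game 1 with order r = 1 has s = 1 and v = NV. -/
/-- The acceptance probability `δ(θ, α)` of a model of quality `α` under verification with
test data size `T` and acceptance criterion `θ` (so `delta T 0 α = 1` for `α ∈ [0,1]` and
`delta T (T+1) α = 0`). -/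
noncomputable def delta (T θ : ℕ) (α : ℝ) : ℝ :=
  ∑ i ∈ Finset.Icc θ T, (T.choose i : ℝ) * α ^ i * (1 - α) ^ (T - i)

/-- Buyer's payoff in Game 1 when the ordered model has price `p`: the buyer strategy is
`none` (no verification, NV) or `some θ` (verify with criterion `θ`), and the seller
delivers model `s`. -/
noncomputable def buyerPayoff (T : ℕ) (α U : ℕ → ℝ) (p CT : ℝ) (s : ℕ) (b : Option ℕ) : ℝ :=
  match b with
  | none => U s - p
  | some θ => delta T θ (α s) * (U s - p) - CT

/-- Seller's payoff in Game 1 when the ordered model has price `p`. -/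
noncomputable def sellerPayoff (T : ℕ) (α C : ℕ → ℝ) (p : ℝ) (s : ℕ) (b : Option ℕ) : ℝ :=
  match b with
  | none => p - C s
  | some θ => delta T θ (α s) * (p - C s)

/-- Pure Nash equilibrium of Game 1 (after the buyer has ordered a model at price `p`):
the seller's delivery `s ∈ {1,…,N}` and the buyer's verification decision
(`none` = NV, `some θ` = verify with criterion `θ ≤ T+1`) are mutual best responses. -/
def IsPNE (N T : ℕ) (α U C : ℕ → ℝ) (p CT : ℝ) (s : ℕ) (b : Option ℕ) : Prop :=
  s ∈ Finset.Icc 1 N ∧ (∀ θ ∈ b, θ ≤ T + 1) ∧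
  (∀ s' ∈ Finset.Icc 1 N, sellerPayoff T α C p s' b ≤ sellerPayoff T α C p s b) ∧
  (buyerPayoff T α U p CT s none ≤ buyerPayoff T α U p CT s b) ∧
  (∀ θ ≤ T + 1, buyerPayoff T α U p CT s (some θ) ≤ buyerPayoff T α U p CT s b)


lemma delta_nonneg (T θ : ℕ) {a : ℝ} (h0 : 0 ≤ a) (h1 : a ≤ 1) : 0 ≤ delta T θ a := by
  apply Finset.sum_nonneg
  intro i _
  exact mul_nonneg (mul_nonneg (by positivity) (pow_nonneg h0 _)) (pow_nonneg (by linarith) _)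

lemma delta_le_one (T θ : ℕ) {a : ℝ} (h0 : 0 ≤ a) (h1 : a ≤ 1) : delta T θ a ≤ 1 := by
  have key : ∑ i ∈ Finset.range (T+1), (T.choose i : ℝ) * a ^ i * (1 - a) ^ (T - i) = 1 := by
    have h := add_pow a (1 - a) T
    simp only [add_sub_cancel, one_pow] at h
    exact (Finset.sum_congr rfl (fun i _ => by ring)).trans h.symm
  calc delta T θ a ≤ ∑ i ∈ Finset.range (T+1), (T.choose i : ℝ) * a ^ i * (1 - a) ^ (T - i) := by
        apply Finset.sum_le_sum_of_subset_of_nonneg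
        · intro i hi
          simp only [Finset.mem_Icc] at hi
          exact Finset.mem_range.mpr (Nat.lt_succ_of_le hi.2)
        · intro i _ _
          exact mul_nonneg (mul_nonneg (by positivity) (pow_nonneg h0 _)) (pow_nonneg (by linarith) _)
    _ = 1 := key

/-- Proposition 1: if the buyer ordered the lowest-quality model `M_1` at price `p 1 ≤ U 1`
and `CT > 0`, then (deliver `M_1`, do not verify) is the unique pure Nash equilibrium of
Game 1. -/
theorem prop1 (N T : ℕ) (hN : 1 ≤ N) (hT : 1 ≤ T)
    (α U C p : ℕ → ℝ) (CT : ℝ)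
    (hα0 : 0 ≤ α 1) (hα1 : α N ≤ 1) (hαmono : MonotoneOn α (Set.Icc 1 N))
    (hU0 : 0 ≤ U 1) (hUmono : MonotoneOn U (Set.Icc 1 N))
    (hC0 : 0 < C 1) (hCmono : StrictMonoOn C (Set.Icc 1 N))
    (hp0 : 0 ≤ p 1) (hpmono : MonotoneOn p (Set.Icc 1 N))
    (hCT : 0 < CT) (hpU : p 1 ≤ U 1) :
    IsPNE N T α U C (p 1) CT 1 none ∧
      ∀ s b, IsPNE N T α U C (p 1) CT s b → s = 1 ∧ b = none := by
  have h1mem : (1:ℕ) ∈ Finset.Icc 1 N := Finset.mem_Icc.mpr ⟨le_refl 1, hN⟩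
  have h1set : (1:ℕ) ∈ Set.Icc 1 N := ⟨le_refl 1, hN⟩
  have hNset : N ∈ Set.Icc 1 N := ⟨hN, le_refl N⟩
  have hα11 : α 1 ≤ 1 := le_trans (hαmono h1set hNset hN) hα1
  constructor
  · refine ⟨h1mem, by intro θ h; simp at h, ?_, le_refl _, ?_⟩
    · intro s' hs'
      simp only [Finset.mem_Icc] at hs'
      have : C 1 ≤ C s' := hCmono.monotoneOn h1set ⟨hs'.1, hs'.2⟩ hs'.1
      simp only [sellerPayoff]
      linarith
    · intro θ _
      simp only [buyerPayoff]
      nlinarith [delta_le_one T θ hα0 hα11, delta_nonneg T θ hα0 hα11]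
  · rintro s b ⟨hsmem, hθb, hseller, hbNV, hbθ⟩
    simp only [Finset.mem_Icc] at hsmem
    have hsset : s ∈ Set.Icc 1 N := ⟨hsmem.1, hsmem.2⟩
    have hαs0 : 0 ≤ α s := le_trans hα0 (hαmono h1set hsset hsmem.1)
    have hαs1 : α s ≤ 1 := le_trans (hαmono hsset hNset hsmem.2) hα1
    have hUs : U 1 ≤ U s := hUmono h1set hsset hsmem.1
    cases b with
    | none =>
      refine ⟨?_, rfl⟩
      have h := hseller 1 h1mem
      simp only [sellerPayoff] at h
      by_contra hne
      have h1s : 1 < s := lt_of_le_of_ne hsmem.1 (Ne.symm hne)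
      have := hCmono h1set hsset h1s
      linarith
    | some θ =>
      exfalso
      simp only [buyerPayoff] at hbNV
      nlinarith [delta_le_one T θ hαs0 hαs1, delta_nonneg T θ hαs0 hαs1]
end

section
/- (Seller indifference at the buyer's equilibrium mixture) Let δ1, δr ∈ [0,1], 0 < C_1 < C_r < p_r, and assume δ1·(p_r − C_1) < δr·(p_r − C_r), so that D := (1 − δ1)·(p_r − C_1) − (1 − δr)·(p_r − C_r) > 0. Define ψ := (C_r − C_1)/D. Then when the buyer verifies with probability ψ (using criterion θ) and does not verify with probability 1 − ψ, the seller's expected payoff from delivering M_1 equals her expected payoff from delivering M_r: (1 − ψ)·(p_r − C_1) + ψ·δ1·(p_r − C_1) = (1 − ψ)·(p_r − C_r) + ψ·δr·(p_r − C_r). -/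
/-- Seller indifference at the buyer's equilibrium mixture: when the buyer verifies with
probability `ψ` and does not verify with probability `1 − ψ`, the seller's expected payoff
from delivering `M_1` equals her expected payoff from delivering `M_r`. -/
theorem seller_indifference (δ1 δr C1 Cr pr D ψ : ℝ)
    (hδ1nn : 0 ≤ δ1) (hδ1le : δ1 ≤ 1) (hδrnn : 0 ≤ δr) (hδrle : δr ≤ 1)
    (hC1 : 0 < C1) (hC : C1 < Cr) (hCpr : Cr < pr)
    (heff : δ1 * (pr - C1) < δr * (pr - Cr))
    (hD : D = (1 - δ1) * (pr - C1) - (1 - δr) * (pr - Cr))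
    (hψ : ψ = (Cr - C1) / D) :
    0 < D ∧
    (1 - ψ) * (pr - C1) + ψ * (δ1 * (pr - C1))
      = (1 - ψ) * (pr - Cr) + ψ * (δr * (pr - Cr)) := by
  have hDpos : 0 < D := by nlinarith
  refine ⟨hDpos, ?_⟩
  subst hψ
  field_simp
  nlinarith [hDpos]
end

section
/- (Validity of the buyer's equilibrium verification probability) Let δ1, δr ∈ [0,1] and 0 < C_1 < C_r < p_r, and define ψ := (C_r − C_1)/((1 − δ1)·(p_r − C_1) − (1 − δr)·(p_r − C_r)) whenever the denominator is positive. Then ψ is a well-defined probability strictly between 0 and 1 if and only if δ1·(p_r − C_1) < δr·(p_r − C_r). -/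
/-- Validity of the buyer's equilibrium verification probability: the probability
`ψ = (Cr − C1) / ((1−δ1)(pr−C1) − (1−δr)(pr−Cr))` is well defined (positive denominator)
and lies strictly between `0` and `1` if and only if `δ1(pr−C1) < δr(pr−Cr)`. -/
theorem verification_probability_valid (δ1 δr C1 Cr pr : ℝ)
    (hδ1nn : 0 ≤ δ1) (hδ1le : δ1 ≤ 1) (hδrnn : 0 ≤ δr) (hδrle : δr ≤ 1)
    (hC1 : 0 < C1) (hC : C1 < Cr) (hCpr : Cr < pr) :
    (0 < (1 - δ1) * (pr - C1) - (1 - δr) * (pr - Cr) ∧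
      0 < (Cr - C1) / ((1 - δ1) * (pr - C1) - (1 - δr) * (pr - Cr)) ∧
      (Cr - C1) / ((1 - δ1) * (pr - C1) - (1 - δr) * (pr - Cr)) < 1)
    ↔ δ1 * (pr - C1) < δr * (pr - Cr) := by
  constructor
  · rintro ⟨hD, _, hlt⟩
    rw [div_lt_one hD] at hlt
    nlinarith
  · intro h
    have hD : 0 < (1 - δ1) * (pr - C1) - (1 - δr) * (pr - Cr) := by nlinarith
    refine ⟨hD, div_pos (by linarith) hD, ?_⟩
    rw [div_lt_one hD]
    nlinarith
end

section
/- (Buyer's equilibrium payoff and loss from information asymmetry) Let δ1, δr ∈ [0,1], U_1 < p_r < U_r, C_T > 0, δ1 < 1, and let φ := ((1 − δr)·(U_r − p_r) + C_T)/Den with Den := (1 − δ1)·(p_r − U_1) + (1 − δr)·(U_r − p_r) > 0. Then the buyer's expected payoff at the mixed equilibrium, φ·(U_1 − p_r) + (1 − φ)·(U_r − p_r), equals U_r − p_r − Δπ_r, where Δπ_r := ((U_r − U_1)·C_T + (1 − δr)·(U_r − U_1)·(U_r − p_r))/Den; moreover Δπ_r > 0, so the buyer's equilibrium payoff is strictly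 below the complete information benchmark payoff U_r − p_r. -/
/-- Buyer's equilibrium payoff and loss from information asymmetry: at the mixed
equilibrium the buyer's expected payoff equals `Ur − pr − Δπr` with `Δπr > 0`, so it lies
strictly below the complete information benchmark `Ur − pr`. -/
theorem buyer_equilibrium_payoff (δ1 δr U1 Ur pr CT Den φ Δπr : ℝ)
    (hδ1nn : 0 ≤ δ1) (hδ1lt : δ1 < 1) (hδrnn : 0 ≤ δr) (hδrle : δr ≤ 1)
    (hU1 : U1 < pr) (hpr : pr < Ur) (hCT : 0 < CT)
    (hDen : Den = (1 - δ1) * (pr - U1) + (1 - δr) * (Ur - pr))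
    (hDenpos : 0 < Den)
    (hφ : φ = ((1 - δr) * (Ur - pr) + CT) / Den)
    (hΔ : Δπr = ((Ur - U1) * CT + (1 - δr) * (Ur - U1) * (Ur - pr)) / Den) :
    φ * (U1 - pr) + (1 - φ) * (Ur - pr) = Ur - pr - Δπr ∧
    0 < Δπr ∧
    φ * (U1 - pr) + (1 - φ) * (Ur - pr) < Ur - pr := by
  have hD : Den ≠ 0 := ne_of_gt hDenpos
  have heq : φ * (U1 - pr) + (1 - φ) * (Ur - pr) = Ur - pr - Δπr := by
    subst hφ hΔ; field_simp; ring
  have hpos : 0 < Δπr := by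
    rw [hΔ]
    apply div_pos _ hDenpos
    have h1 : 0 < Ur - U1 := by linarith
    have h2 : 0 ≤ (1 - δr) * (Ur - U1) * (Ur - pr) := by
      apply mul_nonneg (mul_nonneg (by linarith) (by linarith)); linarith
    nlinarith
  exact ⟨heq, hpos, by linarith⟩
end

section
/- (Seller's equilibrium payoff and loss from information asymmetry) Let δ1, δr ∈ [0,1] with δ1 < δr < 1, 0 < C_1 < C_r < p_r ≤ U_r, and assume δ1·(p_r − C_1) < δr·(p_r − C_r), so D := (1 − δ1)·(p_r − C_1) − (1 − δr)·(p_r − C_r) > 0; let ψ := (C_r − C_1)/D. Then the seller's expected payoff at the mixed equilibrium, (1 − ψ)·(p_r − C_r) + ψ·δr·(p_r − C_r), equals (p_r − C_r)·(δr − δ1)·(p_r − C_1)/D; moreover this quantity is strictly less than p_r − C_r, and hence strictly less than the complete information benchmark payoff U_r − C_r. -/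
/-- Seller's equilibrium payoff and loss from information asymmetry: at the mixed
equilibrium the seller's expected payoff equals `(pr − Cr)·(δr − δ1)·(pr − C1)/D`, which
is strictly less than `pr − Cr` and hence strictly less than the complete information
benchmark `Ur − Cr`. -/
theorem seller_equilibrium_payoff (δ1 δr C1 Cr pr Ur D ψ : ℝ)
    (hδ1nn : 0 ≤ δ1) (hδlt : δ1 < δr) (hδr1 : δr < 1)
    (hC1 : 0 < C1) (hC : C1 < Cr) (hCpr : Cr < pr) (hpU : pr ≤ Ur)
    (heff : δ1 * (pr - C1) < δr * (pr - Cr))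
    (hD : D = (1 - δ1) * (pr - C1) - (1 - δr) * (pr - Cr))
    (hDpos : 0 < D)
    (hψ : ψ = (Cr - C1) / D) :
    (1 - ψ) * (pr - Cr) + ψ * (δr * (pr - Cr))
      = (pr - Cr) * (δr - δ1) * (pr - C1) / D ∧
    (pr - Cr) * (δr - δ1) * (pr - C1) / D < pr - Cr ∧
    (pr - Cr) * (δr - δ1) * (pr - C1) / D < Ur - Cr := by
  have hDne : D ≠ 0 := ne_of_gt hDpos
  have key : (δr - δ1) * (pr - C1) < D := by
    rw [hD]; nlinarith [mul_pos (sub_pos.2 hδr1) (sub_pos.2 hC)]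
  have h2 : (pr - Cr) * (δr - δ1) * (pr - C1) / D < pr - Cr := by
    rw [div_lt_iff₀ hDpos]
    have hprCr : 0 < pr - Cr := sub_pos.2 hCpr
    nlinarith
  refine ⟨?_, h2, lt_of_lt_of_le h2 (by linarith)⟩
  subst hψ hD
  field_simp
  ring
end

section
/- (Price upper bound under the buyer's individual rationality constraint) Let δ1, δr ∈ [0,1] with δ1 < δr, U_1 < U_r, C_T > 0, and for U_1 < p < U_r define Δπ(p) := ((U_r − U_1)·C_T + (1 − δr)·(U_r − U_1)·(U_r − p))/((1 − δ1)·(p − U_1) + (1 − δr)·(U_r − p)). Then: (i) for every p with U_1 < p < U_r, the buyer's equilibrium payoff satisfies U_r − p − Δπ(p) ≥ 0 if and only if (δr − δ1)·(U_r − p)·(p − U_1) ≥ (U_r − U_1)·C_T; (ii) if 4·C_T ≤ (δr − δ1)·(U_r − U_1), then the largest price p satisfying this inequality is p̄ = (U_r + U_1)/2 + sqrt((U_r − U_1)²/4 − (U_r − U_1)·C_T/(δr − δ1)); and (iii) if 4·C_T > (δr − δ1)·(U_r − U_1), then no p ∈ (U_1, U_r) satisfies the inequality. -/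
/-- Price upper bound under the buyer's individual rationality constraint.
(i) For `U1 < p < Ur`, the buyer's equilibrium payoff `Ur − p − Δπ(p)` is nonnegative iff
`(δr − δ1)(Ur − p)(p − U1) ≥ (Ur − U1)·CT`.
(ii) If `4·CT ≤ (δr − δ1)(Ur − U1)`, the largest price satisfying this inequality is
`p̄ = (Ur + U1)/2 + sqrt((Ur − U1)²/4 − (Ur − U1)·CT/(δr − δ1))`.
(iii) If `4·CT > (δr − δ1)(Ur − U1)`, no price `p ∈ (U1, Ur)` satisfies it. -/
theorem price_upper_bound (δ1 δr U1 Ur CT pbar : ℝ)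
    (hδ1nn : 0 ≤ δ1) (hδlt : δ1 < δr) (hδr1 : δr ≤ 1)
    (hU : U1 < Ur) (hCT : 0 < CT)
    (hpbar : pbar = (Ur + U1) / 2 +
      Real.sqrt ((Ur - U1) ^ 2 / 4 - (Ur - U1) * CT / (δr - δ1))) :
    -- (i)
    (∀ p, U1 < p → p < Ur →
      (0 ≤ Ur - p - ((Ur - U1) * CT + (1 - δr) * (Ur - U1) * (Ur - p)) /
          ((1 - δ1) * (p - U1) + (1 - δr) * (Ur - p))
        ↔ (Ur - U1) * CT ≤ (δr - δ1) * (Ur - p) * (p - U1))) ∧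
    -- (ii)
    (4 * CT ≤ (δr - δ1) * (Ur - U1) →
      (Ur - U1) * CT ≤ (δr - δ1) * (Ur - pbar) * (pbar - U1) ∧
      ∀ p, (Ur - U1) * CT ≤ (δr - δ1) * (Ur - p) * (p - U1) → p ≤ pbar) ∧
    -- (iii)
    ((δr - δ1) * (Ur - U1) < 4 * CT →
      ∀ p, U1 < p → p < Ur → ¬ ((Ur - U1) * CT ≤ (δr - δ1) * (Ur - p) * (p - U1))) := by
  have hs : 0 < δr - δ1 := by linarith
  refine ⟨?_, ?_, ?_⟩
  · intro p hp1 hp2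
    have hD : 0 < (1 - δ1) * (p - U1) + (1 - δr) * (Ur - p) := by
      have h1 : 0 < (1 - δ1) * (p - U1) := by nlinarith
      have h2 : 0 ≤ (1 - δr) * (Ur - p) := by nlinarith
      linarith
    rw [sub_nonneg, div_le_iff₀ hD]
    constructor <;> intro h <;> nlinarith
  · intro hdisc
    have hdnn : 0 ≤ (Ur - U1) ^ 2 / 4 - (Ur - U1) * CT / (δr - δ1) := by
      rw [sub_nonneg, div_le_div_iff₀ hs (by norm_num : (0:ℝ) < 4)]
      nlinarith
    set t := Real.sqrt ((Ur - U1) ^ 2 / 4 - (Ur - U1) * CT / (δr - δ1)) with ht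
    have htnn : 0 ≤ t := Real.sqrt_nonneg _
    have htsq : t ^ 2 = (Ur - U1) ^ 2 / 4 - (Ur - U1) * CT / (δr - δ1) := by
      rw [ht, Real.sq_sqrt hdnn]
    have hkey : (δr - δ1) * t ^ 2 = (δr - δ1) * (Ur - U1) ^ 2 / 4 - (Ur - U1) * CT := by
      rw [htsq]; field_simp
    constructor
    · rw [hpbar]
      nlinarith [hkey]
    · intro p hp
      rw [hpbar]
      by_contra hcon
      push_neg at hcon
      have h1 : t < p - (Ur + U1) / 2 := by linarith
      have h2 : t ^ 2 < (p - (Ur + U1) / 2) ^ 2 := by nlinarith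
      nlinarith [hkey, mul_lt_mul_of_pos_left h2 hs]
  · intro hdisc p hp1 hp2 h
    nlinarith [sq_nonneg (Ur + U1 - 2 * p), mul_pos hs hCT]
end

section
/- (Theorem 2, key step: the seller's equilibrium payoff is strictly increasing in the model price) Let δ1, δr ∈ [0,1] be fixed with δ1 < δr, and 0 < C_1 < C_r. For p > C_r define S(p) := (δr − δ1)·(p − C_r)·(p − C_1)/((1 − δ1)·(p − C_1) − (1 − δr)·(p − C_r)). Then the denominator is strictly positive for all p > C_r, and S is strictly increasing on (C_r, ∞): for all C_r < p < p′, S(p) < S(p′). Consequently, the seller maximizes her equilibrium payoff from selling model M_r by charging the largest price compatible with the buyer's individual rationality constraint, i.e. the price upper bound p̄_r. -/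
/-- Theorem 2, key step: the seller's equilibrium payoff
`S(p) = (δr − δ1)(p − Cr)(p − C1) / ((1 − δ1)(p − C1) − (1 − δr)(p − Cr))` has a strictly
positive denominator for every price `p > Cr` and is strictly increasing on `(Cr, ∞)`;
consequently the seller maximizes her equilibrium payoff by charging the largest price
compatible with the buyer's individual rationality constraint, i.e. the price upper
bound `p̄`. -/
theorem seller_payoff_strictly_increasing (δ1 δr C1 Cr : ℝ)
    (hδ1nn : 0 ≤ δ1) (hδlt : δ1 < δr) (hδr1 : δr ≤ 1)
    (hC1 : 0 < C1) (hC : C1 < Cr)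
    (S : ℝ → ℝ)
    (hS : ∀ p, S p = (δr - δ1) * (p - Cr) * (p - C1) /
      ((1 - δ1) * (p - C1) - (1 - δr) * (p - Cr))) :
    (∀ p, Cr < p → 0 < (1 - δ1) * (p - C1) - (1 - δr) * (p - Cr)) ∧
    (∀ p p', Cr < p → p < p' → S p < S p') ∧
    (∀ p pbar, Cr < p → p ≤ pbar → S p ≤ S pbar) := by
  have hden : ∀ p, Cr < p → 0 < (1 - δ1) * (p - C1) - (1 - δr) * (p - Cr) := by
    intro p hp
    nlinarith [mul_nonneg (sub_nonneg.2 hδr1) (sub_nonneg.2 hp.le)]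
  have hmono : ∀ p p', Cr < p → p < p' → S p < S p' := by
    intro p p' hp hpp'
    have hp' : Cr < p' := hp.trans hpp'
    have d1 := hden p hp
    have d2 := hden p' hp'
    rw [hS p, hS p', div_lt_div_iff₀ d1 d2]
    have ha : (0:ℝ) < δr - δ1 := sub_pos.2 hδlt
    have hk : (0:ℝ) ≤ (1 - δr) * (Cr - C1) :=
      mul_nonneg (sub_nonneg.2 hδr1) (sub_nonneg.2 hC.le)
    have hNN : (0:ℝ) < (p' - Cr) * (p' - C1) - (p - Cr) * (p - C1) := by
      nlinarith [sub_pos.2 hp, sub_pos.2 hp', sub_pos.2 hpp', sub_pos.2 (hC.trans hp)]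
    have term1 : (0:ℝ) ≤ (1 - δr) * (Cr - C1) * ((p' - Cr) * (p' - C1) - (p - Cr) * (p - C1)) :=
      mul_nonneg hk hNN.le
    have term2 : (0:ℝ) < (p - C1) * (p' - C1) * (p' - p) :=
      mul_pos (mul_pos (sub_pos.2 (hC.trans hp)) (sub_pos.2 (hC.trans hp'))) (sub_pos.2 hpp')
    nlinarith [mul_nonneg ha.le term1, mul_pos ha (mul_pos ha term2)]
  refine ⟨hden, hmono, ?_⟩
  intro p pbar hp hple
  rcases eq_or_lt_of_le hple with h | h
  · rw [h]
  · exact (hmono p pbar hp h).le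
end
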